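/- For any t, s ∈ (C^∞(ℝ,ℝ))^ℕ and any a, h ∈ ℝ, if t - s ∈ I_nd(ℝ) then J_{a,h} t - J_{a,h} s ∈ I_nd(ℝ). -/
import Mathlib


def Ind (w : ℕ → ℝ → ℝ) : Prop :=
  ∃ Γ : Set ℝ, IsClosed Γ ∧ interior Γ = ∅ ∧
    ∀ x : ℝ, x ∉ Γ → ∃ V ∈ nhds x, V ⊆ Γᶜ ∧
      ∃ μ : ℕ, ∀ ν ≥ μ, ∀ y ∈ V, w ν y = 0

/-- `ρ` is a smooth cutoff with `ρ = 1` on `(-∞,-1] ∪ [1,∞)` and `ρ = 0` on `[-1/2,1/2]`. -/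
def RhoOK (ρ : ℝ → ℝ) : Prop :=
  ContDiff ℝ (⊤ : ℕ∞) ρ ∧ (∀ y : ℝ, y ≤ -1 → ρ y = 1) ∧ (∀ y : ℝ, 1 ≤ y → ρ y = 1) ∧
    (∀ y : ℝ, -(1/2) ≤ y → y ≤ 1/2 → ρ y = 0)

/-- The action `J_{a,h,ν}` on a single function. -/
noncomputable def Jnu (ρ : ℝ → ℝ) (a h : ℝ) (ν : ℕ) (s : ℝ → ℝ) : ℝ → ℝ :=
  fun x => if x ≤ a then ρ (((ν : ℝ) + 1) * (x - a)) * s x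
           else ρ (((ν : ℝ) + 1) * (x - a)) * (s x + h)

/-- The termwise action `J_{a,h}` on sequences of functions. -/
noncomputable def J (ρ : ℝ → ℝ) (a h : ℝ) (s : ℕ → ℝ → ℝ) : ℕ → ℝ → ℝ :=
  fun ν => Jnu ρ a h ν (s ν)

/-- If `t - s ∈ I_nd(ℝ)` then `J_{a,h} t - J_{a,h} s ∈ I_nd(ℝ)`. -/
theorem J_preserves_ind (ρ : ℝ → ℝ) (hρ : RhoOK ρ) (a h : ℝ)
    (t s : ℕ → ℝ → ℝ) (ht : ∀ ν, ContDiff ℝ (⊤ : ℕ∞) (t ν)) (hs : ∀ ν, ContDiff ℝ (⊤ : ℕ∞) (s ν))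
    (hts : Ind (t - s)) : Ind (J ρ a h t - J ρ a h s) := by
  obtain ⟨Γ, hΓc, hΓi, hΓ⟩ := hts
  refine ⟨Γ, hΓc, hΓi, fun x hx => ?_⟩
  obtain ⟨V, hV, hVΓ, μ, hμ⟩ := hΓ x hx
  refine ⟨V, hV, hVΓ, μ, fun ν hν y hy => ?_⟩
  have h0 : t ν y - s ν y = 0 := hμ ν hν y hy
  have hts' : t ν y = s ν y := by linarith
  simp only [Pi.sub_apply, J, Jnu]
  split <;> rw [hts'] <;> ring
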